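/- Let C be a commutative monoid and N a right H(C)-module. The assignment G_*(C, N)([n]) = ⊕_{(a_1,...,a_n) ∈ C^n} N(a_1⋯a_n), with action on a pointed map f : [n] → [m] given by f_*(ι_{(a_1,...,a_n)}(x)) = ι_{(b_1,...,b_m)}((b_0)^{op}-action applied to x), where b_j = ∏_{f(i)=j} a_i, is a well-defined left Γ-module (covariant functor Γ → K-Mod). -/

import Mathlib

open CategoryTheory Opposite DirectSum

set_option maxHeartbeats 1000000
set_option synthInstance.maxHeartbeats 1000000

def HCat (C : Type) := C
def HCat.of {C : Type} : C → HCat C := id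
def HCat.un {C : Type} : HCat C → C := id

instance (C : Type) [CommMonoid C] : Category (HCat C) where
  Hom a b := {c : C // c * a.un = b.un}
  id a := ⟨1, one_mul a.un⟩
  comp f g := ⟨g.1 * f.1, by rw [mul_assoc, f.2, g.2]⟩
  id_comp f := Subtype.ext (mul_one f.1)
  comp_id f := Subtype.ext (one_mul f.1)
  assoc f g h := Subtype.ext (mul_assoc h.1 g.1 f.1).symm

abbrev GammaCat := ℕ

instance : Category GammaCat where
  Hom n m := {f : Fin (n+1) → Fin (m+1) // f 0 = 0}
  id n := ⟨id, rfl⟩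
  comp f g := ⟨g.1 ∘ f.1, by simp [f.2, g.2]⟩
  id_comp f := rfl
  comp_id f := rfl
  assoc f g h := rfl

variable (C : Type) [CommMonoid C] [DecidableEq C] (K : Type) [CommRing K]

/-- Right `H(C)`-modules valued in `K`-modules. -/
abbrev RightHModK := (HCat C)ᵒᵖ ⥤ ModuleCat K

/-- `G_*(C,N)([n]) = ⊕_{(a_1,...,a_n) ∈ C^n} N(a_1 ⋯ a_n)`. -/
abbrev GstObj (N : RightHModK C K) (n : ℕ) : Type :=
  ⨁ v : Fin n → C, N.obj (op (HCat.of (∏ i, v i)))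

/-- `b_j = ∏_{i : f(i) = j} a_i` for a pointed map `f : [n] → [m]` and a tuple `a`. -/
def bProd {n m : ℕ} (f : (n : GammaCat) ⟶ (m : GammaCat)) (v : Fin n → C)
    (j : Fin (m+1)) : C :=
  ∏ i ∈ Finset.univ.filter (fun i : Fin n => f.1 i.succ = j), v i

theorem bProd_mul {n m : ℕ} (f : (n : GammaCat) ⟶ (m : GammaCat)) (v : Fin n → C) :
    bProd C f v 0 * ∏ j : Fin m, bProd C f v j.succ = ∏ i, v i := by
  have h1 : ∏ j : Fin (m+1), bProd C f v j = ∏ i, v i := by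
    exact Finset.prod_fiberwise_of_maps_to (fun x _ => Finset.mem_univ (f.1 x.succ)) v
  rw [Fin.prod_univ_succ] at h1
  exact h1

/-- The covariant action of `G_*(C,N)` on a pointed map `f : [n] → [m]`:
`f_*(ι_{(a_1,...,a_n)}(x)) = ι_{(b_1,...,b_m)}((b_0)^*(x))`. -/
noncomputable def GstMap (N : RightHModK C K) {n m : ℕ}
    (f : (n : GammaCat) ⟶ (m : GammaCat)) :
    GstObj C K N n →ₗ[K] GstObj C K N m :=
  DirectSum.toModule K _ _ (fun v =>
    (DirectSum.lof K (Fin m → C)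
        (fun w : Fin m → C => N.obj (op (HCat.of (∏ j, w j))))
        (fun j : Fin m => bProd C f v j.succ)).comp
      (N.map (Quiver.Hom.op
        (⟨bProd C f v 0, bProd_mul C f v⟩ :
          HCat.of (∏ j : Fin m, bProd C f v j.succ) ⟶ HCat.of (∏ i, v i)))).hom)

/-! The exponents of a composite are computed fibrewise: `b_k(g ∘ f) = ∏_{g j = k} b_j(f)`. For
`k ≠ 0` the fibre of `g` misses `0 ∈ [m]` because `g` is pointed, so `(g ∘ f)_*` and `g_* f_*` send
`ι_a(x)` to the same summand; over `k = 0` the extra factor `b_0(f)` appears, which matches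
composing the two structure maps, since a morphism of `H(C)` is determined by its element of `C`. -/

section bProd

variable {M : Type} [CommMonoid M] {n m l : ℕ}

lemma bProd_eq_prod_ite (f : (n : GammaCat) ⟶ (m : GammaCat)) (v : Fin n → M) (j : Fin (m + 1)) :
    bProd M f v j = ∏ i, if f.1 i.succ = j then v i else 1 :=
  Finset.prod_filter _ _

lemma bProd_comp (f : (n : GammaCat) ⟶ (m : GammaCat)) (g : (m : GammaCat) ⟶ (l : GammaCat))
    (v : Fin n → M) (k : Fin (l + 1)) :
    bProd M (f ≫ g) v k = ∏ j, if g.1 j = k then bProd M f v j else 1 := by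
  unfold bProd
  rw [← Finset.prod_filter, Finset.prod_fiberwise_eq_prod_filter]
  simp only [Finset.mem_filter, Finset.mem_univ, true_and]
  rfl

lemma bProd_comp_succ (f : (n : GammaCat) ⟶ (m : GammaCat))
    (g : (m : GammaCat) ⟶ (l : GammaCat)) (v : Fin n → M) (k : Fin l) :
    bProd M (f ≫ g) v k.succ = bProd M g (fun j => bProd M f v j.succ) k.succ := by
  rw [bProd_comp, Fin.prod_univ_succ, g.2, if_neg (Fin.succ_ne_zero k).symm, one_mul,
    bProd_eq_prod_ite]

lemma bProd_comp_zero (f : (n : GammaCat) ⟶ (m : GammaCat))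
    (g : (m : GammaCat) ⟶ (l : GammaCat)) (v : Fin n → M) :
    bProd M (f ≫ g) v 0 = bProd M f v 0 * bProd M g (fun j => bProd M f v j.succ) 0 := by
  rw [bProd_comp, Fin.prod_univ_succ, g.2, if_pos rfl, bProd_eq_prod_ite _ _ (0 : Fin (l + 1))]

lemma bProd_id_succ (v : Fin n → M) (j : Fin n) : bProd M (𝟙 (n : GammaCat)) v j.succ = v j := by
  simp [bProd, CategoryStruct.id, Fin.succ_inj, Finset.filter_eq']

lemma bProd_id_zero (v : Fin n → M) : bProd M (𝟙 (n : GammaCat)) v 0 = 1 := by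
  simp [bProd, CategoryStruct.id, Fin.succ_ne_zero]

end bProd

section GstMap

variable (N : RightHModK C K) {n m l : ℕ}

/-- `ι_w ∘ c^* : N(a) → G_*(C,N)([m])`, for `c · ∏ w = a`. -/
noncomputable abbrev lofMap {w : Fin m → C} {a c : C} (hc : c * ∏ j, w j = a) :
    N.obj (op (HCat.of a)) →ₗ[K] GstObj C K N m :=
  (lof K (Fin m → C) (fun u => N.obj (op (HCat.of (∏ j, u j)))) w).comp
    (N.map (Quiver.Hom.op (⟨c, hc⟩ : HCat.of (∏ j, w j) ⟶ HCat.of a))).hom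

lemma lofMap_congr {a : C} {w w' : Fin m → C} (hw : w = w') {c c' : C} (hcc : c = c')
    (hc : c * ∏ j, w j = a) (hc' : c' * ∏ j, w' j = a) :
    lofMap C K N hc = lofMap C K N hc' := by
  subst hw hcc
  rfl

lemma lofMap_one {w : Fin m → C} (hc : 1 * ∏ j, w j = ∏ j, w j) :
    lofMap C K N hc = lof K (Fin m → C) (fun u => N.obj (op (HCat.of (∏ j, u j)))) w := by
  have hid : Quiver.Hom.op (⟨1, hc⟩ : HCat.of (∏ j, w j) ⟶ HCat.of (∏ j, w j))
      = 𝟙 (op (HCat.of (∏ j, w j))) := rfl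
  rw [lofMap, hid, N.map_id]
  rfl

lemma GstMap_comp_lof (f : (n : GammaCat) ⟶ (m : GammaCat)) (v : Fin n → C) :
    (GstMap C K N f).comp (lof K (Fin n → C) (fun u => N.obj (op (HCat.of (∏ i, u i)))) v)
      = lofMap C K N (bProd_mul C f v) :=
  LinearMap.ext fun x => by rw [LinearMap.comp_apply, GstMap, toModule_lof]

lemma GstMap_comp_lofMap (g : (m : GammaCat) ⟶ (l : GammaCat)) {w : Fin m → C} {a c : C}
    (hc : c * ∏ j, w j = a) :
    (GstMap C K N g).comp (lofMap C K N hc)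
      = lofMap C K N (show c * bProd C g w 0 * ∏ k, bProd C g w k.succ = a by
          rw [mul_assoc, bProd_mul, hc]) := by
  rw [lofMap, ← LinearMap.comp_assoc, GstMap_comp_lof, lofMap, LinearMap.comp_assoc,
    ← ModuleCat.hom_comp, ← N.map_comp]
  rfl

lemma GstMap_id_comp_lof (v : Fin n → C) :
    (GstMap C K N (𝟙 (n : GammaCat))).comp
        (lof K (Fin n → C) (fun u => N.obj (op (HCat.of (∏ i, u i)))) v)
      = lof K (Fin n → C) (fun u => N.obj (op (HCat.of (∏ i, u i)))) v := by
  rw [GstMap_comp_lof, lofMap_congr C K N (funext (bProd_id_succ v)) (bProd_id_zero v) _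
    (by rw [one_mul]), lofMap_one]

lemma GstMap_comp_comp_lof (f : (n : GammaCat) ⟶ (m : GammaCat))
    (g : (m : GammaCat) ⟶ (l : GammaCat)) (v : Fin n → C) :
    (GstMap C K N (f ≫ g)).comp (lof K (Fin n → C) (fun u => N.obj (op (HCat.of (∏ i, u i)))) v)
      = ((GstMap C K N g).comp (GstMap C K N f)).comp
          (lof K (Fin n → C) (fun u => N.obj (op (HCat.of (∏ i, u i)))) v) := by
  rw [LinearMap.comp_assoc, GstMap_comp_lof, GstMap_comp_lof, GstMap_comp_lofMap]
  exact lofMap_congr C K N (funext (bProd_comp_succ f g v)) (bProd_comp_zero f g v) _ _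

end GstMap

/-- `G_*(C, N)` is a well-defined left `Γ`-module: the (`K`-linear) action on
morphisms preserves identities and compositions. -/
theorem Gst_is_left_Gamma_module (N : RightHModK C K) :
    (∀ n : ℕ, GstMap C K N (𝟙 (n : GammaCat)) = LinearMap.id) ∧
    (∀ (n m l : ℕ) (f : (n : GammaCat) ⟶ (m : GammaCat))
      (g : (m : GammaCat) ⟶ (l : GammaCat)),
      GstMap C K N (f ≫ g) = (GstMap C K N g).comp (GstMap C K N f)) :=
  ⟨fun _ => linearMap_ext K fun v => GstMap_id_comp_lof C K N v,
    fun _ _ _ f g => linearMap_ext K fun v => GstMap_comp_comp_lof C K N f g v⟩
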